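/- arXiv:2101.11777 — 2 statements merged into one kernel-verified Lean document; each statement's English description precedes it below -/
import Mathlib

section
/- Let T be a tree of order m and let T₁ be a subtree of T. If a graph G contains a subtree T₁' isomorphic to T₁, with isomorphism φ: T₁ → T₁', such that d_G(v) ≥ m − 1 for every vertex v ∈ V(G) \ {φ(x) : x ∈ V(T₁), N_T(x) ⊆ V(T₁)}, then G contains a subtree T' isomorphic to T such that T₁' is a subgraph of T'. -/
/-!
Grow a connected subgraph `H ⊇ T₁` of `T` together with an injective map `f` of `H` into `G`
that extends `φ` and sends edges of `H` to edges of `G`, one vertex at a time. If `y ∉ H` is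
adjacent in `T` to `x ∈ H`, then `f x` is not the image of a vertex of `T₁` whose whole
`T`-neighbourhood lies in `T₁` (otherwise `y ∈ T₁ ⊆ H`), so `f x` has degree at least
`m - 1 ≥ |H|` and therefore a neighbour outside `f(H)`, which becomes the image of `y`.
Once `H` spans `T` it is all of `T`, since every edge of a tree is a bridge.
-/

namespace SimpleGraph

variable {V W : Type*} {G : SimpleGraph V} {T : SimpleGraph W}

theorem Subgraph.Preconnected.adj_of_isAcyclic {H : G.Subgraph} (hH : H.Preconnected)
    (hG : G.IsAcyclic) {u v : V} (hu : u ∈ H.verts) (hv : v ∈ H.verts) (huv : G.Adj u v) :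
    H.Adj u v := by
  obtain ⟨p, hp⟩ := (H.preconnected_iff_forall_exists_walk_subgraph.mp hH) hu hv
  have hbridge :=
    isBridge_iff_forall_walk_mem_edges.mp (isAcyclic_iff_forall_adj_isBridge.mp hG huv)
  exact hp.2 (Walk.adj_toSubgraph_iff_mem_edges.mpr (hbridge p))

theorem Connected.exists_adj_mem_notMem (hG : G.Connected) {s : Set V} {a b : V} (ha : a ∈ s)
    (hb : b ∉ s) : ∃ x y, G.Adj x y ∧ x ∈ s ∧ y ∉ s := by
  obtain ⟨d, -, hd₁, hd₂⟩ := (hG.preconnected a b).some.exists_boundary_dart s ha hb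
  exact ⟨_, _, d.adj, hd₁, hd₂⟩

theorem exists_adj_notMem_of_ncard_le_degree [Fintype V] [DecidableRel G.Adj] {s : Set V}
    {v : V} (hv : v ∈ s) (h : s.ncard ≤ G.degree v) : ∃ w, G.Adj v w ∧ w ∉ s := by
  by_contra! hs
  have hsub : G.neighborSet v ⊆ s \ {v} := fun w hw => ⟨hs w hw, (G.ne_of_adj hw).symm⟩
  have hle := Set.ncard_le_ncard hsub
  rw [Set.ncard_sdiff_singleton_of_mem hv, ← Nat.card_coe_set_eq, Nat.card_eq_fintype_card,
    card_neighborSet_eq_degree] at hle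
  have : 0 < s.ncard := (Set.ncard_pos).mpr ⟨v, hv⟩
  omega

variable {H₀ H : T.Subgraph} {f₀ : Copy H₀.coe G} {f : W → V}

structure IsPartialExtension (f₀ : Copy H₀.coe G) (H : T.Subgraph) (f : W → V) : Prop where
  connected : H.Connected
  verts_subset : H₀.verts ⊆ H.verts
  injOn : Set.InjOn f H.verts
  map_adj : ∀ ⦃a b⦄, H.Adj a b → G.Adj (f a) (f b)
  apply_eq : ∀ x : H₀.verts, f x = f₀ x

theorem Subgraph.Connected.exists_isPartialExtension_self (hH₀ : H₀.Connected)
    (f₀ : Copy H₀.coe G) : ∃ f, IsPartialExtension f₀ H₀ f := by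
  obtain ⟨x₀, hx₀⟩ := hH₀.nonempty
  set f := Function.extend Subtype.val f₀ fun _ => f₀ ⟨x₀, hx₀⟩
  have hf : ∀ x : H₀.verts, f x = f₀ x := Subtype.val_injective.extend_apply _ _
  refine ⟨f, hH₀, subset_rfl, fun a ha b hb hab => ?_, fun a b hab => ?_, hf⟩
  · rw [hf ⟨a, ha⟩, hf ⟨b, hb⟩] at hab
    exact congrArg Subtype.val (f₀.injective hab)
  · rw [hf ⟨a, hab.fst_mem⟩, hf ⟨b, hab.snd_mem⟩]
    exact f₀.toHom.map_adj hab

theorem IsPartialExtension.sup_subgraphOfAdj [DecidableEq W] (hf : IsPartialExtension f₀ H f)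
    {x y : W} (hxy : T.Adj x y) (hx : x ∈ H.verts) (hy : y ∉ H.verts) {w : V} (hw : G.Adj (f x) w)
    (hwf : w ∉ f '' H.verts) :
    IsPartialExtension f₀ (H ⊔ T.subgraphOfAdj hxy) (Function.update f y w) := by
  have hverts : (H ⊔ T.subgraphOfAdj hxy).verts = insert y H.verts := by
    ext z
    simp only [Subgraph.verts_sup, subgraphOfAdj_verts, Set.mem_union, Set.mem_insert_iff,
      Set.mem_singleton_iff]
    grind
  have hEq : Set.EqOn (Function.update f y w) f H.verts := fun a ha =>
    Function.update_of_ne (ne_of_mem_of_not_mem ha hy) _ _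
  refine ⟨Subgraph.connected_sup hf.connected.preconnected
      (Subgraph.subgraphOfAdj_connected hxy).preconnected ⟨x, hx, by simp⟩,
    fun a ha => Or.inl (hf.verts_subset ha), ?_, ?_, fun a => ?_⟩
  · rw [hverts, Set.injOn_insert hy, Function.update_self, hEq.image_eq]
    exact ⟨hf.injOn.congr hEq.symm, hwf⟩
  · rintro a b (hab | hab)
    · rw [hEq hab.fst_mem, hEq hab.snd_mem]
      exact hf.map_adj hab
    · rw [subgraphOfAdj_adj, Sym2.eq, Sym2.rel_iff'] at hab
      rcases hab with ⟨rfl, rfl⟩ | ⟨rfl, rfl⟩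
      · rw [Function.update_self, hEq hx]; exact hw
      · rw [Function.update_self, hEq hx]; exact hw.symm
  · rw [hEq (hf.verts_subset a.2), hf.apply_eq]

theorem Copy.le_toSubgraph_of_iso {K : G.Subgraph} (φ : H₀.coe ≃g K.coe) (g : Copy T G)
    (hg : ∀ x : H₀.verts, g x = φ x) : K ≤ g.toSubgraph := by
  have hK (a : K.verts) : g (φ.symm a) = a := by rw [hg, φ.apply_symm_apply]
  refine ⟨fun a ha => ⟨φ.symm ⟨a, ha⟩, trivial, hK ⟨a, ha⟩⟩, fun a b hab => ?_⟩
  exact ⟨φ.symm ⟨a, hab.fst_mem⟩, φ.symm ⟨b, hab.snd_mem⟩,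
    H₀.adj_sub (φ.symm.map_adj_iff.mpr hab), hK _, hK _⟩

variable [Fintype V] [Fintype W] [DecidableRel G.Adj]

theorem IsPartialExtension.exists_ssubset (hT : T.Connected)
    (hdeg : ∀ v, (¬ ∃ x : H₀.verts, T.neighborSet x ⊆ H₀.verts ∧ f₀ x = v) →
      Fintype.card W - 1 ≤ G.degree v)
    (hf : IsPartialExtension f₀ H f) (hH : H.verts ≠ Set.univ) :
    ∃ H' f', IsPartialExtension f₀ H' f' ∧ H.verts ⊂ H'.verts := by
  classical
  obtain ⟨x₀, hx₀⟩ := hf.connected.nonempty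
  obtain ⟨b, hb⟩ := (Set.ne_univ_iff_exists_notMem _).mp hH
  obtain ⟨x, y, hxy, hx, hy⟩ := hT.exists_adj_mem_notMem hx₀ hb
  have hdeg_x : Fintype.card W - 1 ≤ G.degree (f x) := by
    refine hdeg _ fun ⟨z, hzN, hz⟩ => hy (hf.verts_subset (hzN ?_))
    rwa [hf.injOn (hf.verts_subset z.2) hx ((hf.apply_eq z).trans hz)]
  have hcard : (f '' H.verts).ncard ≤ G.degree (f x) := by
    have := Set.ncard_lt_card hH
    rw [Nat.card_eq_fintype_card] at this
    rw [hf.injOn.ncard_image]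
    omega
  obtain ⟨w, hw, hwf⟩ := exists_adj_notMem_of_ncard_le_degree (Set.mem_image_of_mem f hx) hcard
  exact ⟨_, _, hf.sup_subgraphOfAdj hxy hx hy hw hwf,
    Set.ssubset_iff_exists.mpr ⟨fun a ha => Or.inl ha, y, Or.inr (by simp), hy⟩⟩

theorem IsTree.exists_copy_extending (hT : T.IsTree) (hH₀ : H₀.Connected) (f₀ : Copy H₀.coe G)
    (hdeg : ∀ v, (¬ ∃ x : H₀.verts, T.neighborSet x ⊆ H₀.verts ∧ f₀ x = v) →
      Fintype.card W - 1 ≤ G.degree v) :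
    ∃ g : Copy T G, ∀ x : H₀.verts, g x = f₀ x := by
  let S := {s : Set W | ∃ H f, IsPartialExtension f₀ H f ∧ H.verts = s}
  obtain ⟨f₁, hf₁⟩ := hH₀.exists_isPartialExtension_self f₀
  obtain ⟨_, ⟨H, f, hf, rfl⟩, hmax⟩ := S.toFinite.exists_maximal ⟨_, H₀, f₁, hf₁, rfl⟩
  have huniv : H.verts = Set.univ := by
    by_contra hH
    obtain ⟨H', f', hf', hlt⟩ := hf.exists_ssubset hT.connected hdeg hH
    exact hlt.2 (hmax ⟨H', f', hf', rfl⟩ hlt.1)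
  have hmem (a : W) : a ∈ H.verts := huniv ▸ Set.mem_univ a
  refine ⟨⟨⟨f, fun hab => hf.map_adj ?_⟩, Set.injOn_univ.mp (huniv ▸ hf.injOn)⟩,
    hf.apply_eq⟩
  exact hf.connected.preconnected.adj_of_isAcyclic hT.isAcyclic (hmem _) (hmem _) hab

end SimpleGraph

/-- Let `T` be a tree of order `m` and `T₁` a subtree of `T`. If a graph `G` contains a subtree
`T₁' ≅ T₁` via an isomorphism `φ` such that every vertex of `G` outside the set
`{φ(x) : x ∈ V(T₁), N_T(x) ⊆ V(T₁)}` has degree at least `m - 1` in `G`, then `G` contains a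
subtree `T' ≅ T` with `T₁' ⊆ T'`. -/
theorem stmt_5 {V W : Type*} [Fintype V] [Fintype W] (m : ℕ)
    (T : SimpleGraph W) (hT : T.IsTree) (hm : Fintype.card W = m)
    (T₁ : T.Subgraph) (hT₁ : T₁.coe.IsTree)
    (G : SimpleGraph V) [DecidableRel G.Adj]
    (T₁' : G.Subgraph) (φ : T₁.coe ≃g T₁'.coe)
    (hdeg : ∀ v : V,
      (¬ ∃ x : T₁.verts, T.neighborSet (x : W) ⊆ T₁.verts ∧ ((φ x : V) = v)) →
      m - 1 ≤ G.degree v) :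
    ∃ T' : G.Subgraph, T₁' ≤ T' ∧ Nonempty (T'.coe ≃g T) := by
  subst hm
  obtain ⟨g, hg⟩ := hT.exists_copy_extending ⟨hT₁.connected⟩ (T₁'.coeCopy.comp φ.toCopy) hdeg
  exact ⟨g.toSubgraph, g.le_toSubgraph_of_iso φ hg, ⟨g.isoToSubgraph.symm⟩⟩
end

section
/- Let T be a tree of order m and T' a subtree of T. Let L₁ ⊆ Leaf(T) \ V(T'), L₂ ⊆ Leaf(T − L₁) \ V(T') and L₃ = V(T) \ (V(T') ∪ L₁ ∪ L₂). Suppose a graph G contains a subgraph H' isomorphic to T', with isomorphism φ: T' → H', and V(G) \ V(H') has a partition (X₁, X₂, X₃); set X₄ = {φ(v) : v ∈ V(T'), N_T(v) ⊄ V(T')}. If (a) d_G(x) ≥ m − 1 for each x ∈ X₂ ∪ X₃ ∪ X₄, and (b) |N_G(x) \ X₁| ≥ m − 1 − |L₁| and |N_G(x) \ (X₁ ∪ X₂)| ≥ m − 1 − |L₁| − |L₂| for each x ∈ X₃ ∪ X₄, then G contains a subtree H isomorphic to T such that H' is a subgraph of H. -/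
/-!
Root `T` at a vertex `r` of `T'` and extend `φ` greedily, always embedding a vertex whose parent
is already embedded: first the vertices outside `L₁ ∪ L₂` (into `X₃`), then those of `L₂` (into
`X₂ ∪ X₃`), then those of `L₁` (anywhere outside `H'`), each group by increasing depth. A parent is
never in `L₁`, and the parent of a vertex outside `L₁` is not in `L₂` either, so the parent's image
lies in `X₂ ∪ X₃ ∪ X₄`, and even in `X₃ ∪ X₄` unless the new vertex is in `L₁`. If `k` vertices are
embedded so far, all from the groups up to the current one, then (a) or (b) gives the parent's
image at least `k` neighbours of the required kind; at most `k - 1` of them are used, because the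
parent's image is one of the `k` used vertices and not its own neighbour.
-/

namespace SimpleGraph

variable {V W : Type*}

theorem Subgraph.adj_of_isAcyclic {T : SimpleGraph W} (hT : T.IsAcyclic) {T' : T.Subgraph}
    (hT' : T'.Connected) {a b : W} (ha : a ∈ T'.verts) (hb : b ∈ T'.verts) (hab : T.Adj a b) :
    T'.Adj a b := by
  obtain ⟨p, hp⟩ := (T'.connected_iff_forall_exists_walk_subgraph.mp hT').2 ha hb
  -- every edge of an acyclic graph is a bridge, so it lies on every walk between its ends
  have hab' : s(a, b) ∈ p.edges :=
    isBridge_iff_forall_walk_mem_edges.mp (isAcyclic_iff_forall_adj_isBridge.mp hT hab) p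
  exact hp.2 (Walk.adj_toSubgraph_iff_mem_edges.mpr hab')

theorem Subgraph.le_toSubgraph_of_iso {T : SimpleGraph W} {G : SimpleGraph V} {T' : T.Subgraph}
    {H' : G.Subgraph} (φ : T'.coe ≃g H'.coe) (g : Copy T G) (hg : ∀ a : T'.verts, g a = φ a) :
    H' ≤ g.toSubgraph := by
  have hφ : ∀ v : H'.verts, g (φ.symm v) = v := fun v => by rw [hg, φ.apply_symm_apply]
  refine ⟨fun v hv => ⟨_, trivial, hφ ⟨v, hv⟩⟩, fun u w huw => ?_⟩
  have hu := H'.edge_vert huw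
  have hw := H'.edge_vert huw.symm
  have huw' : H'.coe.Adj ⟨u, hu⟩ ⟨w, hw⟩ := huw
  exact ⟨_, _, T'.coe_adj_sub _ _ (φ.symm.map_adj_iff.mpr huw'), hφ ⟨u, hu⟩, hφ ⟨w, hw⟩⟩

theorem exists_adj_notMem_image [Fintype W] [DecidableEq W] [Finite V] {G : SimpleGraph V}
    {S : Finset W} {f : W → V} (hf : Set.InjOn f S) {p x : W} (hp : p ∈ S) (hx : x ∉ S)
    {D : Set W} (hD : ∀ a ∈ insert x S, a ∉ D) {Y : Set V}
    (hY : Fintype.card W - 1 - D.ncard ≤ (G.neighborSet (f p) \ Y).ncard) :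
    ∃ v, G.Adj (f p) v ∧ v ∉ Y ∧ v ∉ f '' S := by
  have hcard : S.card + 1 + D.ncard ≤ Fintype.card W := by
    have h₁ : ((insert x S : Finset W) : Set W).ncard ≤ Dᶜ.ncard :=
      Set.ncard_le_ncard fun a ha => hD a ha
    have h₂ := Set.ncard_compl_add_ncard D
    rw [Set.ncard_coe_finset, Finset.card_insert_of_notMem hx] at h₁
    rw [Nat.card_eq_fintype_card] at h₂
    omega
  -- `f p` is used but is not its own neighbour
  have himage : (f '' S \ {f p}).ncard + 1 = S.card := by
    rw [Set.ncard_sdiff_singleton_add_one (Set.mem_image_of_mem f hp), hf.ncard_image,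
      Set.ncard_coe_finset]
  obtain ⟨v, ⟨hpv, hvY⟩, hv⟩ :=
    Set.exists_mem_notMem_of_ncard_lt_ncard (s := f '' S \ {f p})
      (t := G.neighborSet (f p) \ Y) (by omega)
  exact ⟨v, hpv, hvY, fun hvS => hv ⟨hvS, hpv.ne'⟩⟩

theorem ncard_neighborSet [Fintype V] (G : SimpleGraph V) [DecidableRel G.Adj] (v : V) :
    (G.neighborSet v).ncard = G.degree v := by
  rw [← Nat.card_coe_set_eq, Nat.card_eq_fintype_card, card_neighborSet_eq_degree]

namespace IsTree

variable {T : SimpleGraph W} (hT : T.IsTree) (r : W)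

noncomputable def pathTo (x : W) : T.Walk x r := (hT.existsUnique_path x r).choose

noncomputable def parent (x : W) : W := (hT.pathTo r x).snd

noncomputable def depth (x : W) : ℕ := (hT.pathTo r x).length

variable {r}

theorem isPath_pathTo (x : W) : (hT.pathTo r x).IsPath :=
  (hT.existsUnique_path x r).choose_spec.1

theorem eq_pathTo {x : W} {p : T.Walk x r} (hp : p.IsPath) : p = hT.pathTo r x :=
  (hT.existsUnique_path x r).choose_spec.2 p hp

theorem parent_root : hT.parent r r = r := by
  rw [parent, ← hT.eq_pathTo Walk.IsPath.nil]
  rfl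

theorem ne_root_of_parent_mem {s : Set W} {x : W} (hp : hT.parent r x ∈ s) (hx : x ∉ s) :
    x ≠ r := by
  rintro rfl
  rw [hT.parent_root] at hp
  exact hx hp

theorem adj_parent {x : W} (hx : x ≠ r) : T.Adj x (hT.parent r x) :=
  Walk.adj_snd (Walk.not_nil_of_ne hx)

theorem depth_parent_add_one {x : W} (hx : x ≠ r) :
    hT.depth r (hT.parent r x) + 1 = hT.depth r x := by
  rw [depth, depth, parent, ← hT.eq_pathTo (hT.isPath_pathTo x).tail]
  exact Walk.length_tail_add_one (Walk.not_nil_of_ne hx)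

theorem parent_parent_ne {x : W} (hx : x ≠ r) : hT.parent r (hT.parent r x) ≠ x := by
  intro h
  by_cases hp : hT.parent r x = r
  · rw [hp, parent_root] at h
    exact hx h.symm
  · have h₁ := hT.depth_parent_add_one hp
    have h₂ := hT.depth_parent_add_one hx
    rw [h] at h₁
    omega

theorem parent_eq_of_adj {x y : W} (hxy : T.Adj x y) (hy : y ≠ hT.parent r x) :
    hT.parent r y = x := by
  have hyx : y ∉ (hT.pathTo r x).support := fun h =>
    hy (hT.isAcyclic.eq_snd_of_adj_start (hT.isPath_pathTo x) hxy h)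
  rw [parent, ← hT.eq_pathTo ((hT.isPath_pathTo x).cons hyx (h := hxy.symm))]
  exact Walk.snd_cons _ _

theorem parent_mem_verts {T' : T.Subgraph} (hT' : T'.Connected) (hr : r ∈ T'.verts) {y : W}
    (hy : y ∈ T'.verts) : hT.parent r y ∈ T'.verts := by
  classical
  obtain ⟨p, hp⟩ := (T'.connected_iff_forall_exists_walk_subgraph.mp hT').2 hy hr
  apply hp.1
  rw [Walk.mem_verts_toSubgraph]
  apply p.support_bypass_subset_support
  rw [hT.eq_pathTo p.bypass_isPath]
  exact Walk.getVert_mem_support _ 1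

theorem parent_notMem_of_subsingleton {K L : Set W}
    (hL : ∀ p ∈ L, {y | y ∉ K ∧ T.Adj p y}.Subsingleton) (hK : ∀ y, y ≠ r → hT.parent r y ∉ K)
    (hrL : r ∉ L) {x : W} (hx : x ≠ r) (hxK : x ∉ K) : hT.parent r x ∉ L := by
  intro hp
  have hpr : hT.parent r x ≠ r := fun h => hrL (h ▸ hp)
  exact hT.parent_parent_ne hx
    (hL _ hp ⟨hK _ hpr, hT.adj_parent hpr⟩ ⟨hxK, (hT.adj_parent hx).symm⟩)

end IsTree

variable {β : Type*} [LinearOrder β]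

structure GreedyInvariant (T : SimpleGraph W) (G : SimpleGraph V) (U : Set W) (key : W → β)
    (A : W → Set V) (f₀ : W → V) (S : Finset W) (f : W → V) : Prop where
  subset : U ⊆ S
  eqOn : Set.EqOn f f₀ U
  injOn : Set.InjOn f S
  map_adj : ∀ a ∈ S, ∀ b ∈ S, T.Adj a b → G.Adj (f a) (f b)
  mem : ∀ a ∈ S, a ∉ U → f a ∈ A a
  key_le : ∀ a ∈ S, a ∉ U → ∀ y ∉ S, key a ≤ key y

theorem greedyInvariant_of_iso [Fintype W] {T : SimpleGraph W} (hT : T.IsAcyclic)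
    {T' : T.Subgraph} [DecidablePred (· ∈ T'.verts)] (hT' : T'.Connected) {G : SimpleGraph V}
    {H' : G.Subgraph} (φ : T'.coe ≃g H'.coe) {f₀ : W → V} (hf₀ : ∀ a : T'.verts, f₀ a = φ a)
    (key : W → β) (A : W → Set V) :
    GreedyInvariant T G T'.verts key A f₀ T'.verts.toFinset f₀ where
  subset := by simp
  eqOn _ _ := rfl
  injOn a ha b hb hab := by
    simp only [Set.coe_toFinset] at ha hb
    rw [hf₀ ⟨a, ha⟩, hf₀ ⟨b, hb⟩] at hab
    exact congrArg Subtype.val (φ.injective (Subtype.ext hab))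
  map_adj a ha b hb hab := by
    simp only [Set.mem_toFinset] at ha hb
    rw [hf₀ ⟨a, ha⟩, hf₀ ⟨b, hb⟩]
    exact H'.adj_sub (φ.map_adj_iff.mpr (Subgraph.adj_of_isAcyclic hT hT' ha hb hab))
  mem a ha haU := absurd (Set.mem_toFinset.mp ha) haU
  key_le a ha haU := absurd (Set.mem_toFinset.mp ha) haU

namespace IsTree

variable [Fintype W] [DecidableEq W] {T : SimpleGraph W} (hT : T.IsTree) {r : W}
  {G : SimpleGraph V} {U : Set W} {key : W → β} {A : W → Set V} {f₀ : W → V}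

theorem exists_greedyInvariant_insert (hU : ∀ y ∈ U, hT.parent r y ∈ U)
    (hkey : ∀ x ∉ U, hT.parent r x ∉ U → key (hT.parent r x) < key x)
    (hstep : ∀ S f x, GreedyInvariant T G U key A f₀ S f → x ∉ S → hT.parent r x ∈ S →
      ∃ v ∈ A x, G.Adj (f (hT.parent r x)) v ∧ v ∉ f '' S)
    {S : Finset W} {f : W → V} (h : GreedyInvariant T G U key A f₀ S f) (hS : Sᶜ.Nonempty) :
    ∃ x ∉ S, ∃ f', GreedyInvariant T G U key A f₀ (insert x S) f' := by
  obtain ⟨x, hxc, hmin⟩ := Sᶜ.exists_min_image key hS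
  have hx : x ∉ S := Finset.mem_compl.mp hxc
  have hxU : x ∉ U := fun h' => hx (h.subset h')
  have hp : hT.parent r x ∈ S := by
    by_contra hp
    have hpU : hT.parent r x ∉ U := fun h' => hp (h.subset h')
    exact (hkey x hxU hpU).not_ge (hmin _ (Finset.mem_compl.mpr hp))
  -- a neighbour of `x` other than its parent is a child, whose key exceeds that of `x`
  have hnbr : ∀ a ∈ S, T.Adj x a → a = hT.parent r x := by
    intro a ha hxa
    by_contra hap
    have hpa : hT.parent r a = x := hT.parent_eq_of_adj hxa hap
    have haU : a ∉ U := fun haU => hxU (hpa ▸ hU a haU)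
    exact (hkey a haU (hpa ▸ hxU)).not_ge (hpa ▸ h.key_le a ha haU x hx)
  obtain ⟨v, hvA, hpv, hvS⟩ := hstep S f x h hx hp
  have hfS : Set.EqOn (Function.update f x v) f S := fun a ha =>
    Function.update_of_ne (ne_of_mem_of_not_mem ha hx) _ _
  refine ⟨x, hx, Function.update f x v, ⟨?_, ?_, ?_, ?_, ?_, ?_⟩⟩
  · exact h.subset.trans (by simp)
  · exact fun a ha => (Function.update_of_ne (ne_of_mem_of_not_mem ha hxU) _ _).trans (h.eqOn ha)
  · rw [Finset.coe_insert, Set.injOn_insert hx, Function.update_self, hfS.image_eq]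
    exact ⟨h.injOn.congr hfS.symm, hvS⟩
  · intro a ha b hb hab
    rw [Finset.mem_insert] at ha hb
    rcases ha with rfl | ha <;> rcases hb with rfl | hb
    · exact absurd hab (T.loopless.irrefl _)
    · rw [Function.update_self, hfS hb, hnbr b hb hab]
      exact hpv.symm
    · rw [Function.update_self, hfS ha, hnbr a ha hab.symm]
      exact hpv
    · rw [hfS ha, hfS hb]
      exact h.map_adj a ha b hb hab
  · intro a ha haU
    rcases Finset.mem_insert.mp ha with rfl | ha
    · rwa [Function.update_self]
    · rw [hfS ha]
      exact h.mem a ha haU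
  · intro a ha haU y hy
    rw [Finset.mem_insert, not_or] at hy
    rcases Finset.mem_insert.mp ha with rfl | ha
    · exact hmin y (Finset.mem_compl.mpr hy.2)
    · exact h.key_le a ha haU y hy.2

theorem exists_copy_of_greedyInvariant (hU : ∀ y ∈ U, hT.parent r y ∈ U)
    (hkey : ∀ x ∉ U, hT.parent r x ∉ U → key (hT.parent r x) < key x)
    (hstep : ∀ S f x, GreedyInvariant T G U key A f₀ S f → x ∉ S → hT.parent r x ∈ S →
      ∃ v ∈ A x, G.Adj (f (hT.parent r x)) v ∧ v ∉ f '' S)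
    {S : Finset W} {f : W → V} (h : GreedyInvariant T G U key A f₀ S f) :
    ∃ g : Copy T G, Set.EqOn g f₀ U := by
  induction hn : Sᶜ.card generalizing S f with
  | zero =>
    obtain rfl : S = Finset.univ := by simpa using hn
    have hS := Finset.mem_univ (α := W)
    exact ⟨⟨⟨f, fun hab => h.map_adj _ (hS _) _ (hS _) hab⟩,
      fun a b hab => h.injOn (hS a) (hS b) hab⟩, h.eqOn⟩
  | succ n ih =>
    obtain ⟨x, hx, f', h'⟩ :=
      hT.exists_greedyInvariant_insert hU hkey hstep h (Finset.card_pos.mp (by omega))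
    refine ih h' ?_
    rw [Finset.compl_insert, Finset.card_erase_of_mem (Finset.mem_compl.mpr hx)]
    omega

end IsTree

open Classical in
noncomputable def embeddingStage (L₁ L₂ : Set W) (x : W) : ℕ :=
  if x ∈ L₁ then 2 else if x ∈ L₂ then 1 else 0

/-- Vertices outside `L₁ ∪ L₂` are to be mapped into `X₃`, those of `L₂ \ L₁` into `X₂ ∪ X₃` and
those of `L₁` into `X₁ ∪ X₂ ∪ X₃`, where `X₁ ∪ X₂ ∪ X₃` is the complement of `Hv`. -/
def allowedImages (Hv X₁ X₂ : Set V) (L₁ L₂ : Set W) (x : W) : Set V :=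
  {v | v ∉ Hv ∧ (x ∉ L₁ → v ∉ X₁) ∧ (x ∉ L₁ → x ∉ L₂ → v ∉ X₂)}

section embeddingStage

variable {L₁ L₂ : Set W} {x : W}

theorem embeddingStage_le_one_iff : embeddingStage L₁ L₂ x ≤ 1 ↔ x ∉ L₁ := by
  unfold embeddingStage; split_ifs <;> simp_all

theorem embeddingStage_eq_zero_iff : embeddingStage L₁ L₂ x = 0 ↔ x ∉ L₁ ∧ x ∉ L₂ := by
  unfold embeddingStage; split_ifs <;> simp_all

namespace IsTree

variable {T : SimpleGraph W} (hT : T.IsTree) {r : W}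

theorem embeddingStage_parent_le (hpL₁ : ∀ x, x ≠ r → hT.parent r x ∉ L₁)
    (hpL₂ : ∀ x, x ≠ r → x ∉ L₁ → hT.parent r x ∉ L₂) (hx : x ≠ r) :
    embeddingStage L₁ L₂ (hT.parent r x) ≤ embeddingStage L₁ L₂ x := by
  have h₁ := hpL₁ x hx
  have h₂ := hpL₂ x hx
  unfold embeddingStage; split_ifs <;> simp_all

theorem toLex_embeddingStage_depth_parent_lt (hpL₁ : ∀ x, x ≠ r → hT.parent r x ∉ L₁)
    (hpL₂ : ∀ x, x ≠ r → x ∉ L₁ → hT.parent r x ∉ L₂) (hx : x ≠ r) :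
    toLex (embeddingStage L₁ L₂ (hT.parent r x), hT.depth r (hT.parent r x)) <
      toLex (embeddingStage L₁ L₂ x, hT.depth r x) :=
  Prod.Lex.toLex_lt_toLex'.mpr ⟨hT.embeddingStage_parent_le hpL₁ hpL₂ hx,
    fun _ => Nat.lt_of_succ_le (hT.depth_parent_add_one hx).le⟩

end IsTree

end embeddingStage

section greedyStep

variable {T : SimpleGraph W} {T' : T.Subgraph} {G : SimpleGraph V}
  {H' : G.Subgraph} (φ : T'.coe ≃g H'.coe) {L₁ L₂ : Set W} {X₁ X₂ : Set V} {key : W → β}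
  {f₀ : W → V} {S : Finset W} {f : W → V} {x : W}

theorem GreedyInvariant.verts_subset_image {A : W → Set V}
    (h : GreedyInvariant T G T'.verts key A f₀ S f) (hf₀ : ∀ a : T'.verts, f₀ a = φ a) :
    H'.verts ⊆ f '' S := fun v hv =>
  ⟨φ.symm ⟨v, hv⟩, h.subset (φ.symm ⟨v, hv⟩).2,
    by rw [h.eqOn (φ.symm ⟨v, hv⟩).2, hf₀, φ.apply_symm_apply]⟩

theorem GreedyInvariant.embeddingStage_le [DecidableEq W] {A : W → Set V}
    (h : GreedyInvariant T G T'.verts key A f₀ S f) (hT'L : ∀ a ∈ T'.verts, a ∉ L₁ ∧ a ∉ L₂)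
    (hkey : ∀ a b, key a ≤ key b → embeddingStage L₁ L₂ a ≤ embeddingStage L₁ L₂ b)
    (hx : x ∉ S) : ∀ a ∈ insert x S, embeddingStage L₁ L₂ a ≤ embeddingStage L₁ L₂ x := by
  intro a ha
  rcases Finset.mem_insert.mp ha with rfl | ha
  · exact le_rfl
  by_cases haU : a ∈ T'.verts
  · rw [embeddingStage_eq_zero_iff.mpr (hT'L a haU)]
    exact Nat.zero_le _
  · exact hkey _ _ (h.key_le a ha haU x hx)

variable (hT : T.IsTree) {r : W}

theorem IsTree.image_parent_mem {X₃ X₄ : Set V}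
    (h : GreedyInvariant T G T'.verts key (allowedImages H'.verts X₁ X₂ L₁ L₂) f₀ S f)
    (hf₀ : ∀ a : T'.verts, f₀ a = φ a)
    (hpL₁ : ∀ x, x ≠ r → hT.parent r x ∉ L₁) (hpL₂ : ∀ x, x ≠ r → x ∉ L₁ → hT.parent r x ∉ L₂)
    (hXunion : X₁ ∪ X₂ ∪ X₃ = (H'.verts)ᶜ)
    (hX₄ : X₄ = {v | ∃ x : T'.verts, ¬ T.neighborSet (x : W) ⊆ T'.verts ∧ (φ x : V) = v})
    (hx : x ∉ S) (hp : hT.parent r x ∈ S) :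
    f (hT.parent r x) ∈ X₂ ∪ X₃ ∪ X₄ ∧ (x ∉ L₁ → f (hT.parent r x) ∈ X₃ ∪ X₄) := by
  have hxr := hT.ne_root_of_parent_mem (s := S) hp hx
  by_cases hpU : hT.parent r x ∈ T'.verts
  · have h₄ : f (hT.parent r x) ∈ X₄ := by
      rw [hX₄, h.eqOn hpU]
      exact ⟨⟨_, hpU⟩, fun hsub => hx (h.subset (hsub (hT.adj_parent hxr).symm)), (hf₀ _).symm⟩
    exact ⟨Or.inr h₄, fun _ => Or.inr h₄⟩
  obtain ⟨hH, h₁, h₂⟩ := h.mem _ hp hpU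
  have hX : f (hT.parent r x) ∈ X₁ ∪ X₂ ∪ X₃ := hXunion ▸ hH
  rcases hX with (hX₁ | hX₂) | hX₃
  · exact absurd hX₁ (h₁ (hpL₁ x hxr))
  · exact ⟨Or.inl (Or.inl hX₂), fun hx₁ => absurd hX₂ (h₂ (hpL₁ x hxr) (hpL₂ x hxr hx₁))⟩
  · exact ⟨Or.inl (Or.inr hX₃), fun _ => Or.inl hX₃⟩

theorem IsTree.exists_allowed_adj_notMem_image [Fintype V] [Fintype W] [DecidableEq W]
    [DecidableRel G.Adj] {X₃ X₄ : Set V}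
    (hT'L : ∀ a ∈ T'.verts, a ∉ L₁ ∧ a ∉ L₂) (hL : Disjoint L₁ L₂)
    (hpL₁ : ∀ x, x ≠ r → hT.parent r x ∉ L₁) (hpL₂ : ∀ x, x ≠ r → x ∉ L₁ → hT.parent r x ∉ L₂)
    (hXunion : X₁ ∪ X₂ ∪ X₃ = (H'.verts)ᶜ)
    (hX₄ : X₄ = {v | ∃ x : T'.verts, ¬ T.neighborSet (x : W) ⊆ T'.verts ∧ (φ x : V) = v})
    (ha : ∀ x ∈ X₂ ∪ X₃ ∪ X₄, Fintype.card W - 1 ≤ G.degree x)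
    (hb₁ : ∀ x ∈ X₃ ∪ X₄, Fintype.card W - 1 - L₁.ncard ≤ (G.neighborSet x \ X₁).ncard)
    (hb₂ : ∀ x ∈ X₃ ∪ X₄,
      Fintype.card W - 1 - L₁.ncard - L₂.ncard ≤ (G.neighborSet x \ (X₁ ∪ X₂)).ncard)
    (hkey : ∀ a b, key a ≤ key b → embeddingStage L₁ L₂ a ≤ embeddingStage L₁ L₂ b)
    (hf₀ : ∀ a : T'.verts, f₀ a = φ a)
    (h : GreedyInvariant T G T'.verts key (allowedImages H'.verts X₁ X₂ L₁ L₂) f₀ S f)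
    (hx : x ∉ S) (hp : hT.parent r x ∈ S) :
    ∃ v ∈ allowedImages H'.verts X₁ X₂ L₁ L₂ x, G.Adj (f (hT.parent r x)) v ∧ v ∉ f '' S := by
  have hstage := h.embeddingStage_le hT'L hkey hx
  have hH' := h.verts_subset_image φ hf₀
  have hfp := hT.image_parent_mem φ h hf₀ hpL₁ hpL₂ hXunion hX₄ hx hp
  by_cases hx₁ : x ∈ L₁
  · obtain ⟨v, hpv, -, hvS⟩ := exists_adj_notMem_image (D := ∅) (Y := ∅) h.injOn hp hx (by simp)
      (by rw [Set.sdiff_empty, Set.ncard_empty, ncard_neighborSet G]; exact ha _ hfp.1)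
    exact ⟨v, ⟨fun hv => hvS (hH' hv), fun h => absurd hx₁ h, fun h => absurd hx₁ h⟩, hpv, hvS⟩
  by_cases hx₂ : x ∈ L₂
  · have hD : ∀ a ∈ insert x S, a ∉ L₁ := fun a ha =>
      embeddingStage_le_one_iff.mp ((hstage a ha).trans (embeddingStage_le_one_iff.mpr hx₁))
    obtain ⟨v, hpv, hvX, hvS⟩ := exists_adj_notMem_image h.injOn hp hx hD (hb₁ _ (hfp.2 hx₁))
    exact ⟨v, ⟨fun hv => hvS (hH' hv), fun _ => hvX, fun _ h => absurd hx₂ h⟩, hpv, hvS⟩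
  have hD : ∀ a ∈ insert x S, a ∉ L₁ ∪ L₂ := fun a ha => by
    have h₀ := (hstage a ha).trans_eq (embeddingStage_eq_zero_iff.mpr ⟨hx₁, hx₂⟩)
    simpa using embeddingStage_eq_zero_iff.mp (Nat.le_zero.mp h₀)
  obtain ⟨v, hpv, hvX, hvS⟩ := exists_adj_notMem_image h.injOn hp hx hD
    (by rw [Set.ncard_union_eq hL, ← Nat.sub_sub]; exact hb₂ _ (hfp.2 hx₁))
  exact ⟨v, ⟨fun hv => hvS (hH' hv), fun _ hv => hvX (Or.inl hv), fun _ _ hv => hvX (Or.inr hv)⟩,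
    hpv, hvS⟩

end greedyStep

end SimpleGraph

open SimpleGraph

theorem stmt_8_general {V W : Type*} [Fintype V] [Fintype W] (m : ℕ)
    (T : SimpleGraph W) (hT : T.IsTree) (hm : Fintype.card W = m)
    (T' : T.Subgraph) (hT' : T'.coe.IsTree)
    (L₁ L₂ : Set W)
    (hL₁ : ∀ x ∈ L₁, x ∉ T'.verts ∧ (T.neighborSet x).Subsingleton)
    (hL₂ : ∀ x ∈ L₂, x ∉ T'.verts ∧ x ∉ L₁ ∧
      Set.Subsingleton {y | y ∉ L₁ ∧ T.Adj x y})
    (G : SimpleGraph V) [DecidableRel G.Adj]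
    (H' : G.Subgraph) (φ : T'.coe ≃g H'.coe)
    (X₁ X₂ X₃ : Set V)
    (hXunion : X₁ ∪ X₂ ∪ X₃ = (H'.verts)ᶜ)
    (X₄ : Set V)
    (hX₄ : X₄ = {v | ∃ x : T'.verts, ¬ T.neighborSet (x : W) ⊆ T'.verts ∧ (φ x : V) = v})
    (ha : ∀ x ∈ X₂ ∪ X₃ ∪ X₄, m - 1 ≤ G.degree x)
    (hb₁ : ∀ x ∈ X₃ ∪ X₄, m - 1 - L₁.ncard ≤ (G.neighborSet x \ X₁).ncard)
    (hb₂ : ∀ x ∈ X₃ ∪ X₄,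
      m - 1 - L₁.ncard - L₂.ncard ≤ (G.neighborSet x \ (X₁ ∪ X₂)).ncard) :
    ∃ H : G.Subgraph, H' ≤ H ∧ Nonempty (H.coe ≃g T) := by
  classical
  subst hm
  obtain ⟨⟨r, hr⟩⟩ := hT'.connected.nonempty
  have hT'L : ∀ a ∈ T'.verts, a ∉ L₁ ∧ a ∉ L₂ := fun a ha =>
    ⟨fun h => (hL₁ a h).1 ha, fun h => (hL₂ a h).1 ha⟩
  have hpL₁ : ∀ x, x ≠ r → hT.parent r x ∉ L₁ := fun x hx =>
    hT.parent_notMem_of_subsingleton (K := ∅) (fun p hp => (hL₁ p hp).2.anti fun _ hy => hy.2)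
      (fun _ _ => id) (hT'L r hr).1 hx id
  have hpL₂ : ∀ x, x ≠ r → x ∉ L₁ → hT.parent r x ∉ L₂ := fun x hx =>
    hT.parent_notMem_of_subsingleton (fun p hp => (hL₂ p hp).2.2) hpL₁ (hT'L r hr).2 hx
  let key : W → ℕ ×ₗ ℕ := fun x => toLex (embeddingStage L₁ L₂ x, hT.depth r x)
  let f₀ : W → V := fun a => if h : a ∈ T'.verts then φ ⟨a, h⟩ else φ ⟨r, hr⟩
  have hf₀ : ∀ a : T'.verts, f₀ a = φ a := fun a => dif_pos a.2
  obtain ⟨g, hg⟩ := hT.exists_copy_of_greedyInvariant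
    (fun y hy => hT.parent_mem_verts ⟨hT'.connected⟩ hr hy)
    (fun x hx _ =>
      hT.toLex_embeddingStage_depth_parent_lt hpL₁ hpL₂ (ne_of_mem_of_not_mem hr hx).symm)
    (fun S f x h hx hp => hT.exists_allowed_adj_notMem_image φ hT'L
      (Set.disjoint_left.mpr fun x h₁ h₂ => (hL₂ x h₂).2.1 h₁) hpL₁ hpL₂ hXunion hX₄ ha hb₁ hb₂
      (fun a b hab => (Prod.Lex.toLex_le_toLex'.mp hab).1) hf₀ h hx hp)
    (greedyInvariant_of_iso hT.isAcyclic ⟨hT'.connected⟩ φ hf₀ key _)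
  exact ⟨g.toSubgraph, Subgraph.le_toSubgraph_of_iso φ g fun a => (hg a.2).trans (hf₀ a),
    ⟨g.isoToSubgraph.symm⟩⟩

/-- Let `T` be a tree of order `m` and `T'` a subtree of `T`. Let `L₁ ⊆ Leaf(T) \ V(T')`,
`L₂ ⊆ Leaf(T - L₁) \ V(T')` (and `L₃` the rest of `V(T)`, which plays no role in the
hypotheses). Suppose `G` contains a subgraph `H' ≅ T'` via `φ`, and `(X₁, X₂, X₃)` is a
partition of `V(G) \ V(H')`; let `X₄ = {φ(v) : v ∈ V(T'), N_T(v) ⊄ V(T')}`.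
If (a) `d_G(x) ≥ m - 1` for each `x ∈ X₂ ∪ X₃ ∪ X₄`, and
(b) `|N_G(x) \ X₁| ≥ m - 1 - |L₁|` and `|N_G(x) \ (X₁ ∪ X₂)| ≥ m - 1 - |L₁| - |L₂|` for each
`x ∈ X₃ ∪ X₄`, then `G` contains a subtree `H ≅ T` with `H' ⊆ H`. -/
theorem stmt_8 {V W : Type*} [Fintype V] [Fintype W] (m : ℕ)
    (T : SimpleGraph W) (hT : T.IsTree) (hm : Fintype.card W = m)
    (T' : T.Subgraph) (hT' : T'.coe.IsTree)
    (L₁ L₂ : Set W)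
    (hL₁ : ∀ x ∈ L₁, x ∉ T'.verts ∧ (T.neighborSet x).Subsingleton)
    (hL₂ : ∀ x ∈ L₂, x ∉ T'.verts ∧ x ∉ L₁ ∧
      Set.Subsingleton {y | y ∉ L₁ ∧ T.Adj x y})
    (G : SimpleGraph V) [DecidableRel G.Adj]
    (H' : G.Subgraph) (φ : T'.coe ≃g H'.coe)
    (X₁ X₂ X₃ : Set V)
    (h12 : Disjoint X₁ X₂) (h13 : Disjoint X₁ X₃) (h23 : Disjoint X₂ X₃)
    (hXunion : X₁ ∪ X₂ ∪ X₃ = (H'.verts)ᶜ)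
    (X₄ : Set V)
    (hX₄ : X₄ = {v | ∃ x : T'.verts, ¬ T.neighborSet (x : W) ⊆ T'.verts ∧ (φ x : V) = v})
    (ha : ∀ x ∈ X₂ ∪ X₃ ∪ X₄, m - 1 ≤ G.degree x)
    (hb₁ : ∀ x ∈ X₃ ∪ X₄, m - 1 - L₁.ncard ≤ (G.neighborSet x \ X₁).ncard)
    (hb₂ : ∀ x ∈ X₃ ∪ X₄,
      m - 1 - L₁.ncard - L₂.ncard ≤ (G.neighborSet x \ (X₁ ∪ X₂)).ncard) :
    ∃ H : G.Subgraph, H' ≤ H ∧ Nonempty (H.coe ≃g T) :=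
  stmt_8_general m T hT hm T' hT' L₁ L₂ hL₁ hL₂ G H' φ X₁ X₂ X₃ hXunion X₄ hX₄ ha hb₁ hb₂
end
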